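/- arXiv:1505.03121 — 5 statements merged into one kernel-verified Lean document; each statement's English description precedes it below -/
import Mathlib

section
/- Let K be an imaginary quadratic field with ring of integers O_K, and let α, β, δ, γ ∈ O_K with αδ - βγ = 1. Consider the lattice Λ = βℤ + δℤ ⊂ ℂ. If p is a rational prime dividing all three of N(β), N(δ), and N(β+δ), where N is the field norm, then a contradiction arises; i.e., no rational prime divides all three norms N(β), N(δ), N(β+δ). -/
open NumberField

/-! In a quadratic field the norm factors as `N(x) = x · σ x` with `σ` the nontrivial
automorphism, so for a prime `P` of `𝓞 K` above `p`, `p ∣ N(x)` puts `x` in `P` or in `σ⁻¹ P`.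
By pigeonhole two of `β`, `δ`, `β + δ` then lie in the same proper ideal, whereas any two of them
generate the unit ideal since `β` and `δ` do. -/

theorem Algebra.IsQuadraticExtension.exists_algebraMap_norm_eq_mul (F K : Type*) [Field F]
    [Field K] [Algebra F K] [Algebra.IsQuadraticExtension F K] [Algebra.IsSeparable F K] :
    ∃ σ : Gal(K/F), ∀ x, algebraMap F K (Algebra.norm F x) = x * σ x := by
  have hcard : Nat.card Gal(K/F) = 2 := by
    rw [IsGalois.card_aut_eq_finrank, Algebra.IsQuadraticExtension.finrank_eq_two]
  obtain ⟨σ, hσ, hunique⟩ := (Nat.card_eq_two_iff' 1).mp hcard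
  refine ⟨σ, fun x => ?_⟩
  rw [Algebra.norm_eq_prod_automorphisms, Fintype.prod_eq_mul 1 σ hσ.symm, AlgEquiv.one_apply]
  exact fun τ hτ => absurd (hunique τ hτ.1) hτ.2

theorem NumberField.RingOfIntegers.exists_algebraMap_norm_eq_mul (K : Type*) [Field K]
    [NumberField K] (hdeg : Module.finrank ℚ K = 2) :
    ∃ σ : 𝓞 K →+* 𝓞 K, ∀ x, algebraMap ℤ (𝓞 K) (Algebra.norm ℤ x) = x * σ x := by
  have : Algebra.IsQuadraticExtension ℚ K := ⟨hdeg⟩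
  obtain ⟨σ, hσ⟩ := Algebra.IsQuadraticExtension.exists_algebraMap_norm_eq_mul ℚ K
  refine ⟨RingOfIntegers.mapRingHom σ, fun x => RingOfIntegers.ext ?_⟩
  simpa [← Algebra.coe_norm_int] using hσ x

theorem Ideal.not_isCoprime_of_mem {R : Type*} [CommRing R] {I : Ideal R} (hI : I ≠ ⊤) {x y : R}
    (hx : x ∈ I) (hy : y ∈ I) : ¬IsCoprime x y := by
  rintro ⟨u, v, huv⟩
  exact hI <| I.eq_top_of_isUnit_mem
    (huv ▸ I.add_mem (I.mul_mem_left u hx) (I.mul_mem_left v hy)) isUnit_one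

theorem Ideal.not_isCoprime_of_mem_or_mem {R : Type*} [CommRing R] {I J : Ideal R} (hI : I ≠ ⊤)
    (hJ : J ≠ ⊤) {x y : R} (hx : x ∈ I ∨ x ∈ J) (hy : y ∈ I ∨ y ∈ J)
    (hxy : x + y ∈ I ∨ x + y ∈ J) : ¬IsCoprime x y := by
  rcases hx with hxI | hxJ <;> rcases hy with hyI | hyJ
  · exact not_isCoprime_of_mem hI hxI hyI
  · rcases hxy with hxyI | hxyJ
    · exact not_isCoprime_of_mem hI hxI ((I.add_mem_iff_right hxI).mp hxyI)
    · exact not_isCoprime_of_mem hJ ((J.add_mem_iff_left hyJ).mp hxyJ) hyJ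
  · rcases hxy with hxyI | hxyJ
    · exact not_isCoprime_of_mem hI ((I.add_mem_iff_left hyI).mp hxyI) hyI
    · exact not_isCoprime_of_mem hJ hxJ ((J.add_mem_iff_right hxJ).mp hxyJ)
  · exact not_isCoprime_of_mem hJ hxJ hyJ

theorem stmt_8_general (K : Type*) [Field K] [NumberField K]
    (hdeg : Module.finrank ℚ K = 2)
    (α β γ δ : 𝓞 K) (h : α * δ - β * γ = 1)
    (p : ℕ) (hp : p.Prime) :
    ¬((p : ℤ) ∣ Algebra.norm ℤ β ∧ (p : ℤ) ∣ Algebra.norm ℤ δ ∧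
      (p : ℤ) ∣ Algebra.norm ℤ (β + δ)) := by
  rintro ⟨hβ, hδ, hβδ⟩
  obtain ⟨σ, hσ⟩ := RingOfIntegers.exists_algebraMap_norm_eq_mul K hdeg
  have : (Ideal.span {(p : ℤ)}).IsPrime :=
    (Ideal.span_singleton_prime (by exact_mod_cast hp.ne_zero)).mpr (Nat.prime_iff_prime_int.mp hp)
  obtain ⟨P, hP, hlies⟩ := (Ideal.span {(p : ℤ)}).nonempty_primesOver (S := 𝓞 K)
  have hmem (x : 𝓞 K) (hx : (p : ℤ) ∣ Algebra.norm ℤ x) : x ∈ P ∨ x ∈ P.comap σ := by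
    refine hP.mem_or_mem ?_
    rw [← hσ, ← Ideal.mem_of_liesOver P (Ideal.span {(p : ℤ)})]
    exact Ideal.mem_span_singleton.mpr hx
  exact Ideal.not_isCoprime_of_mem_or_mem hP.ne_top (Ideal.comap_ne_top σ hP.ne_top)
    (hmem β hβ) (hmem δ hδ) (hmem _ hβδ) ⟨-γ, α, by linear_combination h⟩

/-- In the ring of integers of an imaginary quadratic field, if `αδ - βγ = 1`
then no rational prime divides all three of `N(β)`, `N(δ)`, `N(β+δ)`. -/
theorem stmt_8 (K : Type*) [Field K] [NumberField K]
    (hdeg : Module.finrank ℚ K = 2)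
    (him : ∀ v : InfinitePlace K, v.IsComplex)
    (α β γ δ : 𝓞 K) (h : α * δ - β * γ = 1)
    (p : ℕ) (hp : p.Prime) :
    ¬((p : ℤ) ∣ Algebra.norm ℤ β ∧ (p : ℤ) ∣ Algebra.norm ℤ δ ∧
      (p : ℤ) ∣ Algebra.norm ℤ (β + δ)) :=
  stmt_8_general K hdeg α β γ δ h p hp
end

section
/- In PGL₂(ℤ), the subgroup generated by γ₁ = [[-1,2],[-1,1]], γ₂ = [[1,-1],[2,-1]], γ₃ = [[0,1],[-1,0]] equals Γ³, the subgroup of PSL₂(ℤ) generated by cubes of all elements. In particular, γ₁γ₂γ₃ = [[1,3],[0,1]] and each γᵢ has order 2 in PSL₂(ℤ). -/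
open Matrix

abbrev SL2Z := Matrix.SpecialLinearGroup (Fin 2) ℤ
abbrev PSL2Z := SL2Z ⧸ Subgroup.center SL2Z

def γ₁ : SL2Z := ⟨!![-1, 2; -1, 1], by norm_num [Matrix.det_fin_two_of]⟩
def γ₂ : SL2Z := ⟨!![1, -1; 2, -1], by norm_num [Matrix.det_fin_two_of]⟩
def γ₃ : SL2Z := ⟨!![0, 1; -1, 0], by norm_num [Matrix.det_fin_two_of]⟩
def T₃ : SL2Z := ⟨!![1, 3; 0, 1], by norm_num [Matrix.det_fin_two_of]⟩

noncomputable def π : SL2Z →* PSL2Z := QuotientGroup.mk' (Subgroup.center SL2Z)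

/-! Each `γᵢ` squares to `-1` in `SL₂(ℤ)` without being scalar, so it has order `2` in `PSL₂(ℤ)`
and is its own cube; hence `H = ⟨γ₁, γ₂, γ₃⟩ ≤ Γ³`. Conversely, `PSL₂(ℤ)` is generated by
`γ₃ = -S` and `T`, and conjugation by `T` and by `T⁻¹` sends each `γᵢ` to a word in the `γⱼ`, so
`H` is normal. The quotient `PSL₂(ℤ)/H` is then cyclic, generated by the image of `T`, whose cube
`T³ = γ₁γ₂γ₃` lies in `H`; so every cube lies in `H`. -/

namespace Subgroup

variable {G : Type*} [Group G]

theorem normal_closure_of_conj_mem {s : Set G} {g : G} (hgen : closure (insert g s) = ⊤)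
    (hconj : ∀ x ∈ s, g * x * g⁻¹ ∈ closure s) (hconj' : ∀ x ∈ s, g⁻¹ * x * g ∈ closure s) :
    (closure s).Normal := by
  have map_conj_le {a : G} (ha : ∀ x ∈ s, a * x * a⁻¹ ∈ closure s) :
      (closure s).map (MulAut.conj a) ≤ closure s := by
    rw [MonoidHom.map_closure, closure_le]
    rintro _ ⟨x, hx, rfl⟩
    exact ha x hx
  have hg : g ∈ normalizer (closure s : Set G) := by
    rw [mem_normalizer_iff_map_conj_eq]
    refine le_antisymm (map_conj_le hconj) fun y hy => ⟨g⁻¹ * y * g, ?_, by simp [mul_assoc]⟩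
    simpa using map_conj_le (a := g⁻¹) (by simpa using hconj') ⟨y, hy, rfl⟩
  rw [← normalizer_eq_top_iff, eq_top_iff, ← hgen, closure_le, Set.insert_subset_iff]
  exact ⟨hg, subset_closure.trans le_normalizer⟩

theorem pow_mem_of_closure_insert_eq_top {s : Set G} [(closure s).Normal] {g : G} {n : ℕ}
    (hgen : closure (insert g s) = ⊤) (hg : g ^ n ∈ closure s) (x : G) : x ^ n ∈ closure s := by
  let q := QuotientGroup.mk' (closure s)
  have hq : closure {q g} = ⊤ := by
    rw [eq_top_iff, ← map_top_of_surjective q (QuotientGroup.mk'_surjective _), ← hgen,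
      MonoidHom.map_closure, Set.image_insert_eq, closure_le, Set.insert_subset_iff]
    refine ⟨subset_closure rfl, ?_⟩
    rintro _ ⟨y, hy, rfl⟩
    have hqy : q y = 1 := (QuotientGroup.eq_one_iff y).2 (subset_closure hy)
    exact hqy ▸ one_mem _
  obtain ⟨k, hk⟩ := mem_closure_singleton.1 (hq ▸ mem_top (q x))
  have hqg : q g ^ (n : ℤ) = 1 := by
    rw [zpow_natCast, ← map_pow]
    exact (QuotientGroup.eq_one_iff _).2 hg
  rw [← QuotientGroup.eq_one_iff, ← QuotientGroup.mk'_apply, map_pow, ← hk, ← zpow_natCast,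
    zpow_comm, hqg, _root_.one_zpow]

end Subgroup

namespace Matrix.SpecialLinearGroup

variable {n R : Type*} [Fintype n] [DecidableEq n] [CommRing R]

theorem neg_one_mem_center [Fact (Even (Fintype.card n))] :
    (-1 : SpecialLinearGroup n R) ∈ Subgroup.center (SpecialLinearGroup n R) :=
  Subgroup.mem_center_iff.2 fun g => by rw [mul_neg_one, neg_one_mul]

theorem notMem_center_of_apply_ne_zero {A : SpecialLinearGroup n R} {i j : n} (hij : i ≠ j)
    (hA : A i j ≠ 0) : A ∉ Subgroup.center (SpecialLinearGroup n R) := by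
  rintro hc
  obtain ⟨r, -, hr⟩ := mem_center_iff.1 hc
  simp [← hr, hij] at hA

end Matrix.SpecialLinearGroup

open ModularGroup Matrix.SpecialLinearGroup

theorem π_eq_one_iff (g : SL2Z) : π g = 1 ↔ g ∈ Subgroup.center SL2Z := QuotientGroup.eq_one_iff g

theorem π_surjective : Function.Surjective π := QuotientGroup.mk'_surjective _

theorem π_neg (g : SL2Z) : π (-g) = π g := by
  rw [← neg_one_mul, map_mul, (π_eq_one_iff _).2 neg_one_mem_center, one_mul]

theorem orderOf_π_eq_two {γ : SL2Z} (hsq : γ * γ = -1) (hγ : γ 0 1 ≠ 0) : orderOf (π γ) = 2 :=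
  orderOf_eq_prime (by rw [sq, ← map_mul, hsq, π_eq_one_iff]; exact neg_one_mem_center)
    ((π_eq_one_iff γ).not.2 (notMem_center_of_apply_ne_zero zero_ne_one hγ))

theorem closure_π_γ₃_T_eq_top : Subgroup.closure {π γ₃, π T} = ⊤ := by
  rw [← π_neg, show -γ₃ = S by decide, ← Set.image_pair, ← MonoidHom.map_closure,
    _root_.SpecialLinearGroup.SL2Z_generators, Subgroup.map_top_of_surjective _ π_surjective]

theorem closure_insert_π_T_eq_top : Subgroup.closure (insert (π T) {π γ₁, π γ₂, π γ₃}) = ⊤ :=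
  eq_top_iff.2 <| closure_π_γ₃_T_eq_top ▸ Subgroup.closure_mono (by simp [Set.insert_subset_iff])

theorem normal_closure_π_γ : (Subgroup.closure {π γ₁, π γ₂, π γ₃}).Normal := by
  set K := Subgroup.closure ({γ₁, γ₂, γ₃} : Set SL2Z)
  have hK : K ≤ (Subgroup.closure {π γ₁, π γ₂, π γ₃}).comap π := by
    rw [← Subgroup.map_le_iff_le_comap, MonoidHom.map_closure, Set.image_insert_eq,
      Set.image_pair]
  have h₁ : γ₁ ∈ K := Subgroup.subset_closure (by simp)
  have h₂ : γ₂ ∈ K := Subgroup.subset_closure (by simp)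
  have h₃ : γ₃ ∈ K := Subgroup.subset_closure (by simp)
  refine Subgroup.normal_closure_of_conj_mem closure_insert_π_T_eq_top ?_ ?_ <;>
    simp only [Set.mem_insert_iff, Set.mem_singleton_iff, forall_eq_or_imp, forall_eq,
      ← map_inv, ← map_mul] <;> refine ⟨hK ?_, hK ?_, hK ?_⟩
  · exact (by decide : γ₁ * γ₂ * γ₁ = T * γ₁ * T⁻¹) ▸ mul_mem (mul_mem h₁ h₂) h₁
  · exact (by decide : γ₁ * γ₃ * γ₁ = T * γ₂ * T⁻¹) ▸ mul_mem (mul_mem h₁ h₃) h₁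
  · exact (by decide : γ₁ = T * γ₃ * T⁻¹) ▸ h₁
  · exact (by decide : γ₃ = T⁻¹ * γ₁ * T) ▸ h₃
  · exact (by decide : γ₃ * γ₁ * γ₃ = T⁻¹ * γ₂ * T) ▸ mul_mem (mul_mem h₃ h₁) h₃
  · exact (by decide : γ₃ * γ₂ * γ₃ = T⁻¹ * γ₃ * T) ▸ mul_mem (mul_mem h₃ h₂) h₃

/-- In `PSL₂(ℤ)`, the subgroup generated by `γ₁, γ₂, γ₃` equals `Γ³`, the subgroup
generated by cubes of all elements; moreover `γ₁γ₂γ₃ = [[1,3],[0,1]]` and each `γᵢ`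
has order `2` in `PSL₂(ℤ)`. -/
theorem stmt_10 :
    Subgroup.closure {π γ₁, π γ₂, π γ₃} =
      Subgroup.closure {x : PSL2Z | ∃ g : PSL2Z, x = g ^ 3} ∧
    γ₁ * γ₂ * γ₃ = T₃ ∧
    orderOf (π γ₁) = 2 ∧ orderOf (π γ₂) = 2 ∧ orderOf (π γ₃) = 2 := by
  have order₁ : orderOf (π γ₁) = 2 := orderOf_π_eq_two (by decide) (by decide)
  have order₂ : orderOf (π γ₂) = 2 := orderOf_π_eq_two (by decide) (by decide)
  have order₃ : orderOf (π γ₃) = 2 := orderOf_π_eq_two (by decide) (by decide)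
  have eq_cube {x : PSL2Z} (hx : orderOf x = 2) : x = x ^ 3 := by
    rw [← pow_mod_orderOf, hx, pow_one]
  have : (Subgroup.closure {π γ₁, π γ₂, π γ₃}).Normal := normal_closure_π_γ
  have cube_T : π T ^ 3 ∈ Subgroup.closure {π γ₁, π γ₂, π γ₃} := by
    rw [← map_pow, (by decide : T ^ 3 = γ₁ * γ₂ * γ₃), map_mul, map_mul]
    exact mul_mem (mul_mem (Subgroup.subset_closure (by simp))
      (Subgroup.subset_closure (by simp))) (Subgroup.subset_closure (by simp))
  refine ⟨le_antisymm ?_ ?_, by decide, order₁, order₂, order₃⟩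
  · rw [Subgroup.closure_le]
    rintro _ (rfl | rfl | rfl)
    exacts [Subgroup.subset_closure ⟨_, eq_cube order₁⟩,
      Subgroup.subset_closure ⟨_, eq_cube order₂⟩, Subgroup.subset_closure ⟨_, eq_cube order₃⟩]
  · rw [Subgroup.closure_le]
    rintro _ ⟨g, rfl⟩
    exact Subgroup.pow_mem_of_closure_insert_eq_top closure_insert_π_T_eq_top cube_T g
end

section
/- The subgroup G = ⟨γ₁, γ₂, γ₃⟩ of PSL₂(ℤ) generated by γ₁ = [[-1,2],[-1,1]], γ₂ = [[1,-1],[2,-1]], γ₃ = [[0,1],[-1,0]] intersects the group B of upper triangular unipotent matrices {[[1,n],[0,1]] : n ∈ ℤ} exactly in the cyclic subgroup {[[1,3n],[0,1]] : n ∈ ℤ} generated by γ₁γ₂γ₃. -/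
open Matrix

def T₁ : SL2Z := ⟨!![1, 1; 0, 1], by norm_num [Matrix.det_fin_two_of]⟩
/-! Reducing mod 3 and dividing out the quaternion subgroup `Q₈ = {g | g⁴ = 1}` of `SL₂(𝔽₃)`
gives a homomorphism from `PSL₂(ℤ)` to a group of order 3, the center `±1` lying in `Q₈`.
The generators `γᵢ` have trace 0, hence `γᵢ⁴ = 1`, so `G` lies in its kernel, while `T₁` maps to
an element of order 3. Thus `T₁ⁿ ∈ G` forces `3 ∣ n`; conversely `T₃ = γ₁γ₂γ₃`. -/

open scoped MatrixGroups

theorem Matrix.SpecialLinearGroup.pow_card_eq_one_of_mem_center {n R : Type*} [Fintype n]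
    [DecidableEq n] [CommRing R] {A : SpecialLinearGroup n R}
    (hA : A ∈ Subgroup.center (SpecialLinearGroup n R)) : A ^ Fintype.card n = 1 := by
  obtain ⟨r, hr, hrA⟩ := mem_center_iff.mp hA
  ext : 1
  rw [coe_pow, ← hrA, ← map_pow, hr, map_one, coe_one]

theorem Subgroup.zpowers_inf_ker {G H : Type*} [Group G] [Group H] (f : G →* H) (x : G) :
    zpowers x ⊓ f.ker = zpowers (x ^ orderOf (f x)) := by
  apply le_antisymm
  · rintro _ ⟨⟨n, rfl⟩, hn⟩
    obtain ⟨m, rfl⟩ := orderOf_dvd_iff_zpow_eq_one.mpr (by simpa using hn)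
    exact ⟨m, by simp [_root_.zpow_mul]⟩
  · rw [zpowers_le]
    exact ⟨pow_mem (mem_zpowers x) _, by simp [pow_orderOf_eq_one]⟩

/-- Closure under multiplication is special to `SL₂(𝔽₃)`: the elements with `g⁴ = 1` are `±1`
and the six of trace 0, and they form `Q₈`. -/
def quaternionSubgroup : Subgroup SL(2, ZMod 3) where
  carrier := {g | g ^ 4 = 1}
  mul_mem' := by decide
  one_mem' := one_pow 4
  inv_mem' {g} hg := by simpa [inv_pow] using hg

theorem mem_quaternionSubgroup {g : SL(2, ZMod 3)} : g ∈ quaternionSubgroup ↔ g ^ 4 = 1 :=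
  Iff.rfl

instance : quaternionSubgroup.Normal where
  conj_mem g hg x := by rw [mem_quaternionSubgroup, conj_pow, hg, mul_one, mul_inv_cancel]

def reduceModQuaternion : SL2Z →* SL(2, ZMod 3) ⧸ quaternionSubgroup :=
  (QuotientGroup.mk' _).comp (SpecialLinearGroup.map (Int.castRingHom (ZMod 3)))

theorem reduceModQuaternion_eq_one_iff (g : SL2Z) :
    reduceModQuaternion g = 1 ↔ SpecialLinearGroup.map (Int.castRingHom (ZMod 3)) (g ^ 4) = 1 := by
  rw [reduceModQuaternion, MonoidHom.comp_apply, QuotientGroup.mk'_apply,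
    QuotientGroup.eq_one_iff, mem_quaternionSubgroup, map_pow]

theorem reduceModQuaternion_eq_one {g : SL2Z} (hg : g ^ 4 = 1) : reduceModQuaternion g = 1 := by
  rw [reduceModQuaternion_eq_one_iff, hg, map_one]

noncomputable def pslReduceModQuaternion : PSL2Z →* SL(2, ZMod 3) ⧸ quaternionSubgroup :=
  QuotientGroup.lift _ reduceModQuaternion fun _ hz ↦
    reduceModQuaternion_eq_one <| by
      rw [show 4 = Fintype.card (Fin 2) * 2 from rfl, pow_mul,
        SpecialLinearGroup.pow_card_eq_one_of_mem_center hz, one_pow]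

theorem pslReduceModQuaternion_π (g : SL2Z) :
    pslReduceModQuaternion (π g) = reduceModQuaternion g :=
  rfl

theorem closure_γ_le_ker_pslReduceModQuaternion :
    Subgroup.closure {π γ₁, π γ₂, π γ₃} ≤ pslReduceModQuaternion.ker := by
  have hker {γ : SL2Z} (hγ : γ ^ 4 = 1) : π γ ∈ pslReduceModQuaternion.ker :=
    reduceModQuaternion_eq_one hγ
  rw [Subgroup.closure_le]
  rintro _ (rfl | rfl | rfl)
  exacts [hker (by decide), hker (by decide), hker (by decide)]

theorem T₁_pow_three : T₁ ^ 3 = T₃ := by decide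

theorem γ₁_mul_γ₂_mul_γ₃ : γ₁ * γ₂ * γ₃ = T₃ := by decide

theorem orderOf_pslReduceModQuaternion_π_T₁ : orderOf (pslReduceModQuaternion (π T₁)) = 3 := by
  refine orderOf_eq_prime ?_ ?_
  · rw [← map_pow, ← map_pow, T₁_pow_three, pslReduceModQuaternion_π,
      reduceModQuaternion_eq_one_iff]
    decide
  · rw [pslReduceModQuaternion_π, Ne, reduceModQuaternion_eq_one_iff]
    decide

/-- In `PSL₂(ℤ)`, the subgroup `G = ⟨γ₁,γ₂,γ₃⟩` intersects the group
`B = {[[1,n],[0,1]] : n ∈ ℤ}` exactly in the cyclic subgroup generated by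
`γ₁γ₂γ₃ = [[1,3],[0,1]]`. -/
theorem stmt_11 :
    Subgroup.closure {π γ₁, π γ₂, π γ₃} ⊓ Subgroup.zpowers (π T₁) =
      Subgroup.zpowers (π T₃) := by
  have hT₃ : π T₃ = π T₁ ^ 3 := by rw [← T₁_pow_three, map_pow]
  have hT₃_mem : π T₃ ∈ Subgroup.closure {π γ₁, π γ₂, π γ₃} := by
    rw [← γ₁_mul_γ₂_mul_γ₃, map_mul, map_mul]
    exact mul_mem (mul_mem (Subgroup.subset_closure (by simp))
      (Subgroup.subset_closure (by simp))) (Subgroup.subset_closure (by simp))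
  apply le_antisymm
  · calc _ ≤ Subgroup.zpowers (π T₁) ⊓ pslReduceModQuaternion.ker :=
          le_inf inf_le_right (inf_le_left.trans closure_γ_le_ker_pslReduceModQuaternion)
      _ = Subgroup.zpowers (π T₃) := by
          rw [Subgroup.zpowers_inf_ker, orderOf_pslReduceModQuaternion_π_T₁, hT₃]
  · exact le_inf (Subgroup.zpowers_le.mpr hT₃_mem) (Subgroup.zpowers_le.mpr ⟨3, by simp [hT₃]⟩)
end

section
/- Let a, b, c, d be the curvatures of four circles forming a K-cluster with discriminant Δ, i.e., the first row of a matrix W with Wᵀ G_M W = R₀ where the first coordinate function gives curvatures. Then 2(a² + b² + c² + d²) - (a+b+c+d)² - (Δ+4)a² = 0. Equivalently, this quadratic relation on curvatures follows from the identity W R₀⁻¹ Wᵀ = G_M⁻¹ by examining the appropriate entry. -/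
open Matrix

noncomputable def GM : Matrix (Fin 4) (Fin 4) ℝ :=
  !![0, -1/2, 0, 0; -1/2, 0, 0, 0; 0, 0, 1, 0; 0, 0, 0, 1]

/-!
From `Wᵀ G W = R₀` and `R₀ Q = -Δ • 1`, where `Q = 2 • 1 - J - (Δ + 4) • E₀₀` is the matrix of the
quadratic form in the theorem, one gets `W Q Wᵀ = -Δ • G⁻¹` (a one-sided inverse of a square
matrix is two-sided). The `(1, 1)` entry of `G⁻¹` vanishes, and the `(1, 1)` entry of `W Q Wᵀ` is
the quadratic form evaluated at the curvatures.
-/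

theorem Matrix.mul_mul_transpose_eq_smul_one_of_transpose_mul_mul_eq
    {n K : Type*} [Fintype n] [DecidableEq n] [Field K] {G W M Q : Matrix n n K} {c : K}
    (hc : c ≠ 0) (hW : Wᵀ * G * W = M) (hMQ : M * Q = c • 1) :
    G * (W * Q * Wᵀ) = c • 1 := by
  have hleft : Wᵀ * (G * W * (c⁻¹ • Q)) = 1 := by
    rw [← Matrix.mul_assoc, ← Matrix.mul_assoc, hW, Matrix.mul_smul, hMQ, smul_smul,
      inv_mul_cancel₀ hc, one_smul]
  have hright : G * W * (c⁻¹ • Q) * Wᵀ = 1 := mul_eq_one_comm.mp hleft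
  calc G * (W * Q * Wᵀ) = c • (G * W * (c⁻¹ • Q) * Wᵀ) := by
        rw [Matrix.mul_smul, Matrix.smul_mul, smul_smul, mul_inv_cancel₀ hc, one_smul]
        simp only [Matrix.mul_assoc]
    _ = c • 1 := by rw [hright]

noncomputable def clusterGram (Δ : ℝ) : Matrix (Fin 4) (Fin 4) ℝ :=
  !![1, -1, -1, -1;
     -1, 1, 1 + Δ/2, 1 + Δ/2;
     -1, 1 + Δ/2, 1, 1 + Δ/2;
     -1, 1 + Δ/2, 1 + Δ/2, 1]

def descartesForm (Δ : ℝ) : Matrix (Fin 4) (Fin 4) ℝ :=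
  !![-(Δ + 3), -1, -1, -1;
     -1, 1, -1, -1;
     -1, -1, 1, -1;
     -1, -1, -1, 1]

theorem clusterGram_mul_descartesForm (Δ : ℝ) :
    clusterGram Δ * descartesForm Δ = (-Δ) • 1 := by
  ext i j
  fin_cases i <;> fin_cases j <;>
    simp [clusterGram, descartesForm, mul_apply, Fin.sum_univ_four] <;> ring

theorem mul_descartesForm_mul_transpose_apply_self (Δ : ℝ) (W : Matrix (Fin 4) (Fin 4) ℝ)
    (i : Fin 4) :
    (W * descartesForm Δ * Wᵀ) i i =
      2 * ((W i 0)^2 + (W i 1)^2 + (W i 2)^2 + (W i 3)^2)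
        - (W i 0 + W i 1 + W i 2 + W i 3)^2 - (Δ + 4) * (W i 0)^2 := by
  simp [descartesForm, mul_apply, Fin.sum_univ_four]
  ring

theorem GM_mul_apply_zero (X : Matrix (Fin 4) (Fin 4) ℝ) (j : Fin 4) :
    (GM * X) 0 j = -X 1 j / 2 := by
  simp [GM, mul_apply, Fin.sum_univ_four]
  ring

/-- The "Descartes equation" for `K`-clusters: if `Wᵀ G_M W = R₀` and `a,b,c,d` are
the curvatures (second coordinates of the columns of `W`), then
`2(a²+b²+c²+d²) = (a+b+c+d)² + (Δ+4)a²`. -/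
theorem stmt_14 (Δ : ℝ) (hΔ : Δ < 0) (W : Matrix (Fin 4) (Fin 4) ℝ)
    (hW : Wᵀ * GM * W =
      !![1, -1, -1, -1;
         -1, 1, 1 + Δ/2, 1 + Δ/2;
         -1, 1 + Δ/2, 1, 1 + Δ/2;
         -1, 1 + Δ/2, 1 + Δ/2, 1]) :
    2 * ((W 1 0)^2 + (W 1 1)^2 + (W 1 2)^2 + (W 1 3)^2) =
      (W 1 0 + W 1 1 + W 1 2 + W 1 3)^2 + (Δ + 4) * (W 1 0)^2 := by
  have hGX : GM * (W * descartesForm Δ * Wᵀ) = (-Δ) • 1 :=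
    mul_mul_transpose_eq_smul_one_of_transpose_mul_mul_eq (neg_ne_zero.mpr hΔ.ne) hW
      (clusterGram_mul_descartesForm Δ)
  have hX : (W * descartesForm Δ * Wᵀ) 1 1 = 0 := by
    simpa [GM_mul_apply_zero] using congrFun (congrFun hGX 0) 1
  rw [mul_descartesForm_mul_transpose_apply_self] at hX
  linarith
end

section
/- Given a belt of four vectors v₁, v₂, v₃, v₄ in ℝ⁴ (with pairwise Pedoe products as in a ℚ(√-7) tentbase), the two peaks v₅ and v₅' that complete the belt to a tent satisfy v₅ + v₅' = v₁ + v₂ + v₃ + v₄. Abstractly: if v₅ satisfies the linear-quadratic conditions ⟨v₅,v₅⟩ = 1, ⟨v₅,v₁⟩ = -5/2, ⟨v₅,v₂⟩ = -1, ⟨v₅,v₃⟩ = -5/2, ⟨v₅,v₄⟩ = -1 (with respect to the Minkowski form G_M), then so does v₅' := v₁+v₂+v₃+v₄-v₅, where v₁,...,v₄ satisfy the tentbase Gram relations. -/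
open Matrix

/-- The Minkowski bilinear form on ℝ⁴. -/
noncomputable def P (x y : Fin 4 → ℝ) : ℝ := x ⬝ᵥ GM.mulVec y

/-!
Only bilinearity and symmetry of `P` matter. With `s = v₁ + v₂ + v₃ + v₄`, every row of the Gram
matrix of the belt sums to `-7/2`, so `⟨s, vᵢ⟩ = -7/2`, `⟨s, s⟩ = -14` and `⟨s, v₅⟩ = -7`.
Hence `⟨s - v₅, vᵢ⟩ = -7/2 - ⟨v₅, vᵢ⟩` swaps the values `-1` and `-5/2`, and
`⟨s - v₅, s - v₅⟩ = ⟨s, s⟩ - 2⟨s, v₅⟩ + ⟨v₅, v₅⟩ = -14 + 14 + 1 = 1`.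
-/

theorem LinearMap.BilinForm.IsSymm.apply_sub_sub_self {R M : Type*} [CommRing R]
    [AddCommGroup M] [Module R M] {B : LinearMap.BilinForm R M} (hB : B.IsSymm) (x y : M) :
    B (x - y) (x - y) = B x x - 2 * B x y + B y y := by
  simp only [map_sub, LinearMap.sub_apply, hB.eq y x]
  ring

theorem GM_isSymm : GM.IsSymm := by
  ext i j
  fin_cases i <;> fin_cases j <;> rfl

theorem P_eq_toBilin' (x y : Fin 4 → ℝ) : P x y = GM.toBilin' x y :=
  (Matrix.toBilin'_apply' GM x y).symm

/-- In a `ℚ(√-7)` tentbase, if `v₅` is a peak then `v₅' = v₁+v₂+v₃+v₄-v₅` is the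
other peak, satisfying the same Pedoe product conditions with odd/even indices
exchanged. -/
theorem stmt_17 (v₁ v₂ v₃ v₄ v₅ : Fin 4 → ℝ)
    (h11 : P v₁ v₁ = 1) (h22 : P v₂ v₂ = 1) (h33 : P v₃ v₃ = 1) (h44 : P v₄ v₄ = 1)
    (h12 : P v₁ v₂ = -1) (h23 : P v₂ v₃ = -1) (h34 : P v₃ v₄ = -1) (h41 : P v₄ v₁ = -1)
    (h13 : P v₁ v₃ = -5/2) (h24 : P v₂ v₄ = -5/2)
    (h55 : P v₅ v₅ = 1)
    (h51 : P v₅ v₁ = -5/2) (h52 : P v₅ v₂ = -1)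
    (h53 : P v₅ v₃ = -5/2) (h54 : P v₅ v₄ = -1) :
    P (v₁ + v₂ + v₃ + v₄ - v₅) (v₁ + v₂ + v₃ + v₄ - v₅) = 1 ∧
    P (v₁ + v₂ + v₃ + v₄ - v₅) v₁ = -1 ∧
    P (v₁ + v₂ + v₃ + v₄ - v₅) v₂ = -5/2 ∧
    P (v₁ + v₂ + v₃ + v₄ - v₅) v₃ = -1 ∧
    P (v₁ + v₂ + v₃ + v₄ - v₅) v₄ = -5/2 := by
  simp only [P_eq_toBilin'] at *
  have hB : GM.toBilin'.IsSymm := Matrix.isSymm_toBilin'_iff_isSymm.mpr GM_isSymm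
  set B := GM.toBilin'
  set s := v₁ + v₂ + v₃ + v₄
  have row_sum (w : Fin 4 → ℝ) : B s w = B v₁ w + B v₂ w + B v₃ w + B v₄ w := by
    simp only [s, map_add, LinearMap.add_apply]
  have hs₁ : B s v₁ = -7/2 := by linarith [row_sum v₁, hB.eq v₂ v₁, hB.eq v₃ v₁]
  have hs₂ : B s v₂ = -7/2 := by linarith [row_sum v₂, hB.eq v₃ v₂, hB.eq v₄ v₂]
  have hs₃ : B s v₃ = -7/2 := by linarith [row_sum v₃, hB.eq v₄ v₃]
  have hs₄ : B s v₄ = -7/2 := by linarith [row_sum v₄, hB.eq v₁ v₄]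
  have hss : B s s = -14 := by
    simp only [s, map_add] at hs₁ hs₂ hs₃ hs₄ ⊢
    linarith
  have hs₅ : B s v₅ = -7 := by
    linarith [row_sum v₅, hB.eq v₁ v₅, hB.eq v₂ v₅, hB.eq v₃ v₅, hB.eq v₄ v₅]
  rw [hB.apply_sub_sub_self]
  simp only [map_sub, LinearMap.sub_apply]
  refine ⟨?_, ?_, ?_, ?_, ?_⟩ <;> linarith
end
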